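/- arXiv:2306.03196 — 4 statements merged into one kernel-verified Lean document; each statement's English description precedes it below -/
import Mathlib

section
/- Let G be a finite simple graph, let s and t be two distinct vertices of G, and let D be an st-orientation of G (an acyclic orientation whose unique source is s and unique sink is t) with no transitive edges. Let a, b, f, m be four pairwise distinct vertices of G such that {a,f}, {f,b}, {a,m}, {m,b} are edges of G, the vertex m has degree exactly 2 in G, and m ∉ {s,t}. Then the edge {a,f} is oriented from a to f if and only if the edge {f,b} is oriented from f to b. -/
/-!
Since `m` has degree two and is neither the source nor the sink, one of its neighbours `a`, `b`
points into `m` and the other out of it, so the path `a – m – b` is directed, say `a → m → b`.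
Now `a → f` together with `b → f` would make `a → f` transitive via `a → m → b → f`, and
`f → a` together with `f → b` would make `f → b` transitive via `f → a → m → b`.
-/

namespace SimpleGraph

variable {V : Type*} {G : SimpleGraph V}

lemma eq_or_eq_of_adj_of_degree_eq_two {a b m u : V} [Fintype (G.neighborSet m)]
    (hab : a ≠ b) (ham : G.Adj m a) (hbm : G.Adj m b) (hdeg : G.degree m = 2)
    (hmu : G.Adj m u) : u = a ∨ u = b := by
  classical
  have hsub : ({a, b} : Finset V) ⊆ G.neighborFinset m := by
    simp [Finset.insert_subset_iff, ham, hbm]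
  have heq : ({a, b} : Finset V) = G.neighborFinset m :=
    Finset.eq_of_subset_of_card_le hsub
      (by rw [Finset.card_pair hab, card_neighborFinset_eq_degree, hdeg])
  simpa [← heq] using (G.mem_neighborFinset m u).mpr hmu

end SimpleGraph

section Orientation

variable {V : Type*} {G : SimpleGraph V} {D : V → V → Prop}

def NoTransitiveEdges (D : V → V → Prop) : Prop :=
  ∀ u v, D u v → ¬ ∃ w, w ≠ v ∧ D u w ∧ Relation.ReflTransGen D w v

lemma NoTransitiveEdges.not_of_path3 (hD : NoTransitiveEdges D) {u w x v : V}
    (huw : D u w) (hwx : D w x) (hxv : D x v) (hwv : w ≠ v) : ¬ D u v := fun huv =>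
  hD u v huv ⟨w, hwv, huw, .head hwx (.single hxv)⟩

lemma directed_path_of_adj_eq_or_eq (hOrient : ∀ u v, D u v → G.Adj u v)
    (hTotal : ∀ u v, G.Adj u v → (D u v ↔ ¬ D v u)) {a b m : V}
    (hN : ∀ u, G.Adj m u → u = a ∨ u = b) (hin : ∃ u, D u m) (hout : ∃ u, D m u) :
    (D a m ∧ D m b) ∨ (D b m ∧ D m a) := by
  obtain ⟨p, hpm⟩ := hin
  obtain ⟨q, hmq⟩ := hout
  have hpq : p ≠ q := by
    rintro rfl
    exact (hTotal p m (hOrient p m hpm)).mp hpm hmq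
  rcases hN p (hOrient p m hpm).symm with hp | hp <;>
    rcases hN q (hOrient m q hmq) with hq | hq
  · exact absurd (hp.trans hq.symm) hpq
  · exact .inl ⟨hp ▸ hpm, hq ▸ hmq⟩
  · exact .inr ⟨hp ▸ hpm, hq ▸ hmq⟩
  · exact absurd (hp.trans hq.symm) hpq

lemma NoTransitiveEdges.iff_of_path2 (hD : NoTransitiveEdges D)
    (hTotal : ∀ u v, G.Adj u v → (D u v ↔ ¬ D v u)) {a b f m : V} (hab : a ≠ b) (hfm : f ≠ m)
    (hEaf : G.Adj a f) (hEfb : G.Adj f b) (ham : D a m) (hmb : D m b) : D a f ↔ D f b := by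
  constructor
  · intro haf
    by_contra hfb
    exact hD.not_of_path3 ham hmb ((hTotal b f hEfb.symm).mpr hfb) hfm.symm haf
  · intro hfb
    by_contra haf
    exact hD.not_of_path3 ((hTotal f a hEaf.symm).mpr haf) ham hmb hab hfb

end Orientation

theorem stmt0_general {V : Type*} [Fintype V]
    (G : SimpleGraph V) [DecidableRel G.Adj]
    (s t : V)
    (D : V → V → Prop)
    -- D is an orientation of G
    (hOrient : ∀ u v, D u v → G.Adj u v)
    (hTotal : ∀ u v, G.Adj u v → (D u v ↔ ¬ D v u))
    -- s is the unique source, t is the unique sink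
    (hSourceUnique : ∀ v, (∀ u, ¬ D u v) → v = s)
    (hSinkUnique : ∀ v, (∀ u, ¬ D v u) → v = t)
    -- D has no transitive edges
    (hNonTransitive : ∀ u v, D u v →
      ¬ ∃ w, w ≠ v ∧ D u w ∧ Relation.ReflTransGen D w v)
    -- the configuration
    (a b f m : V)
    (hab : a ≠ b)
    (hfm : f ≠ m)
    (hEaf : G.Adj a f) (hEfb : G.Adj f b) (hEam : G.Adj a m) (hEmb : G.Adj m b)
    (hdeg : G.degree m = 2)
    (hms : m ≠ s) (hmt : m ≠ t) :
    (D a f ↔ D f b) := by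
  have hN : ∀ u, G.Adj m u → u = a ∨ u = b := fun _ =>
    G.eq_or_eq_of_adj_of_degree_eq_two hab hEam.symm hEmb hdeg
  have hin : ∃ u, D u m := by
    by_contra! h
    exact hms (hSourceUnique m h)
  have hout : ∃ u, D m u := by
    by_contra! h
    exact hmt (hSinkUnique m h)
  rcases directed_path_of_adj_eq_or_eq hOrient hTotal hN hin hout with
    ⟨hDam, hDmb⟩ | ⟨hDbm, hDma⟩
  · exact NoTransitiveEdges.iff_of_path2 hNonTransitive hTotal hab hfm hEaf hEfb hDam hDmb
  · have h := NoTransitiveEdges.iff_of_path2 hNonTransitive hTotal hab.symm hfm hEfb.symm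
      hEaf.symm hDbm hDma
    rw [hTotal a f hEaf, hTotal f b hEfb, h]

/-- In a non-transitive st-orientation, a 2-path a–m–b through a
degree-2 vertex m (with m ∉ {s,t}) forces the edges {a,f} and {f,b} to be
consistently oriented relative to f: the edge {a,f} is oriented from a to f
iff the edge {f,b} is oriented from f to b. -/
theorem stmt0 {V : Type*} [Fintype V] [DecidableEq V]
    (G : SimpleGraph V) [DecidableRel G.Adj]
    (s t : V) (hst : s ≠ t)
    (D : V → V → Prop)
    -- D is an orientation of G
    (hOrient : ∀ u v, D u v → G.Adj u v)
    (hTotal : ∀ u v, G.Adj u v → (D u v ↔ ¬ D v u))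
    -- D is acyclic
    (hAcyclic : ∀ x, ¬ Relation.TransGen D x x)
    -- s is the unique source, t is the unique sink
    (hSource : ∀ u, ¬ D u s)
    (hSink : ∀ u, ¬ D t u)
    (hSourceUnique : ∀ v, (∀ u, ¬ D u v) → v = s)
    (hSinkUnique : ∀ v, (∀ u, ¬ D v u) → v = t)
    -- D has no transitive edges
    (hNonTransitive : ∀ u v, D u v →
      ¬ ∃ w, w ≠ v ∧ D u w ∧ Relation.ReflTransGen D w v)
    -- the configuration
    (a b f m : V)
    (hab : a ≠ b) (haf : a ≠ f) (ham : a ≠ m)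
    (hbf : b ≠ f) (hbm : b ≠ m) (hfm : f ≠ m)
    (hEaf : G.Adj a f) (hEfb : G.Adj f b) (hEam : G.Adj a m) (hEmb : G.Adj m b)
    (hdeg : G.degree m = 2)
    (hms : m ≠ s) (hmt : m ≠ t) :
    (D a f ↔ D f b) :=
  stmt0_general G s t D hOrient hTotal hSourceUnique hSinkUnique hNonTransitive a b f m hab hfm hEaf
    hEfb hEam hEmb hdeg hms hmt
end

section
/- Let G be a finite simple graph, let s and t be two distinct vertices of G, and let D be an st-orientation of G (an acyclic orientation whose unique source is s and unique sink is t) with no transitive edges. Let a, b, c, f, m₁, m₂ be six pairwise distinct vertices of G such that {a,f}, {f,b}, {f,c}, {a,m₁}, {m₁,b}, {a,m₂}, {m₂,c} are edges of G, the vertices m₁ and m₂ each have degree exactly 2 in G, and m₁, m₂ ∉ {s,t}. Then either the edge {a,f} is oriented toward f and both edges {f,b}, {f,c} are oriented away from f, or the edge {a,f} is oriented away from f and both edges {f,b}, {f,c} are oriented toward f. -/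
/-!
A degree-2 vertex `m` other than `s`, `t` has an in- and an out-edge, so its two edges form a
directed path of length 2. If `x → m → y` is such a path and `f` is adjacent to `x` and `y`, the
orientation is forced to `x → f → y`: reversing `x f` makes `f → y` transitive or closes a cycle,
and reversing `f y` makes `x → f` transitive. The path through `m₁` orients `{a,f}` and `{f,b}`
coherently, the one through `m₂` orients `{a,f}` and `{f,c}`, and both must agree on `{a,f}`.
-/

namespace SimpleGraph

variable {V : Type*} {G : SimpleGraph V}

lemma eq_or_eq_of_degree_eq_two {m x y z : V} [Fintype (G.neighborSet m)]
    (hdeg : G.degree m = 2) (hxy : x ≠ y) (hx : G.Adj m x) (hy : G.Adj m y) (hz : G.Adj m z) :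
    z = x ∨ z = y := by
  classical
  have hpair : ({x, y} : Finset V) = G.neighborFinset m := by
    refine Finset.eq_of_subset_of_card_le ?_ ?_
    · simp [Finset.insert_subset_iff, hx, hy]
    · rw [card_neighborFinset_eq_degree, hdeg, Finset.card_pair hxy]
  simpa [← hpair] using (G.mem_neighborFinset m z).mpr hz

end SimpleGraph

section Orientation

variable {V : Type*} {G : SimpleGraph V} {D : V → V → Prop}

lemma orientation_through_of_degree_eq_two {s t m x y : V} [Fintype (G.neighborSet m)]
    (hOrient : ∀ u v, D u v → G.Adj u v)
    (hTotal : ∀ u v, G.Adj u v → (D u v ↔ ¬ D v u))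
    (hSourceUnique : ∀ v, (∀ u, ¬ D u v) → v = s)
    (hSinkUnique : ∀ v, (∀ u, ¬ D v u) → v = t)
    (hdeg : G.degree m = 2) (hms : m ≠ s) (hmt : m ≠ t) (hxy : x ≠ y)
    (hx : G.Adj x m) (hy : G.Adj m y) :
    (D x m ∧ D m y) ∨ (D y m ∧ D m x) := by
  have hnbr : ∀ z, G.Adj m z → z = x ∨ z = y :=
    fun z hz => G.eq_or_eq_of_degree_eq_two hdeg hxy hx.symm hy hz
  obtain ⟨u, hum⟩ : ∃ u, D u m := by
    by_contra! h
    exact hms (hSourceUnique m h)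
  obtain ⟨v, hmv⟩ : ∃ v, D m v := by
    by_contra! h
    exact hmt (hSinkUnique m h)
  have huv : u ≠ v := by
    rintro rfl
    exact (hTotal u m (hOrient u m hum)).mp hum hmv
  obtain rfl | rfl := hnbr u (hOrient u m hum).symm <;>
    obtain rfl | rfl := hnbr v (hOrient m v hmv)
  exacts [absurd rfl huv, .inl ⟨hum, hmv⟩, .inr ⟨hum, hmv⟩, absurd rfl huv]

lemma orient_of_parallel_path {x m y f : V}
    (hTotal : ∀ u v, G.Adj u v → (D u v ↔ ¬ D v u))
    (hAcyclic : ∀ x, ¬ Relation.TransGen D x x)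
    (hNonTransitive : ∀ u v, D u v → ¬ ∃ w, w ≠ v ∧ D u w ∧ Relation.ReflTransGen D w v)
    (hxm : D x m) (hmy : D m y) (hxy : x ≠ y) (hmf : m ≠ f)
    (hxf : G.Adj x f) (hfy : G.Adj f y) :
    D x f ∧ D f y := by
  have hD_xf : D x f := by
    by_contra hnxf
    have hD_fx : D f x := (hTotal f x hxf.symm).mpr hnxf
    have hD_fy : D f y := by
      by_contra hnfy
      have hD_yf : D y f := (hTotal y f hfy.symm).mpr hnfy
      exact hAcyclic f (.head hD_fx (.head hxm (.head hmy (.single hD_yf))))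
    exact hNonTransitive f y hD_fy ⟨x, hxy, hD_fx, .head hxm (.single hmy)⟩
  refine ⟨hD_xf, ?_⟩
  by_contra hnfy
  have hD_yf : D y f := (hTotal y f hfy.symm).mpr hnfy
  exact hNonTransitive x f hD_xf ⟨m, hmf, hxm, .head hmy (.single hD_yf)⟩

end Orientation

theorem stmt1_general {V : Type*} [Fintype V]
    (G : SimpleGraph V) [DecidableRel G.Adj]
    (s t : V)
    (D : V → V → Prop)
    -- D is an orientation of G
    (hOrient : ∀ u v, D u v → G.Adj u v)
    (hTotal : ∀ u v, G.Adj u v → (D u v ↔ ¬ D v u))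
    -- D is acyclic
    (hAcyclic : ∀ x, ¬ Relation.TransGen D x x)
    -- s is the unique source, t is the unique sink
    (hSourceUnique : ∀ v, (∀ u, ¬ D u v) → v = s)
    (hSinkUnique : ∀ v, (∀ u, ¬ D v u) → v = t)
    -- D has no transitive edges
    (hNonTransitive : ∀ u v, D u v →
      ¬ ∃ w, w ≠ v ∧ D u w ∧ Relation.ReflTransGen D w v)
    -- the extended fork configuration
    (a b c f m₁ m₂ : V)
    (hdistinct : [a, b, c, f, m₁, m₂].Nodup)
    (hEaf : G.Adj a f) (hEfb : G.Adj f b) (hEfc : G.Adj f c)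
    (hEam₁ : G.Adj a m₁) (hEm₁b : G.Adj m₁ b)
    (hEam₂ : G.Adj a m₂) (hEm₂c : G.Adj m₂ c)
    (hdeg₁ : G.degree m₁ = 2) (hdeg₂ : G.degree m₂ = 2)
    (hm₁s : m₁ ≠ s) (hm₁t : m₁ ≠ t) (hm₂s : m₂ ≠ s) (hm₂t : m₂ ≠ t) :
    (D a f ∧ D f b ∧ D f c) ∨ (D f a ∧ D b f ∧ D c f) := by
  simp only [List.nodup_cons, List.mem_cons, List.not_mem_nil,
    or_false, not_or, List.nodup_nil, and_true] at hdistinct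
  obtain ⟨⟨hab, hac, -, -, -⟩, -, -, ⟨hfm₁, hfm₂⟩, -⟩ := hdistinct
  have forced {x m y : V} (hxm : D x m) (hmy : D m y) (hxy : x ≠ y) (hmf : m ≠ f)
      (hxf : G.Adj x f) (hfy : G.Adj f y) : D x f ∧ D f y :=
    orient_of_parallel_path hTotal hAcyclic hNonTransitive hxm hmy hxy hmf hxf hfy
  have hAsymm_af : D a f → ¬ D f a := (hTotal a f hEaf).mp
  rcases orientation_through_of_degree_eq_two hOrient hTotal hSourceUnique hSinkUnique
      hdeg₁ hm₁s hm₁t hab hEam₁ hEm₁b with ⟨ham₁, hm₁b⟩ | ⟨hbm₁, hm₁a⟩ <;>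
    rcases orientation_through_of_degree_eq_two hOrient hTotal hSourceUnique hSinkUnique
      hdeg₂ hm₂s hm₂t hac hEam₂ hEm₂c with ⟨ham₂, hm₂c⟩ | ⟨hcm₂, hm₂a⟩
  · obtain ⟨haf, hfb⟩ := forced ham₁ hm₁b hab (Ne.symm hfm₁) hEaf hEfb
    exact .inl ⟨haf, hfb, (forced ham₂ hm₂c hac (Ne.symm hfm₂) hEaf hEfc).2⟩
  · exact absurd (forced hcm₂ hm₂a (Ne.symm hac) (Ne.symm hfm₂) hEfc.symm hEaf.symm).2
      (hAsymm_af (forced ham₁ hm₁b hab (Ne.symm hfm₁) hEaf hEfb).1)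
  · exact absurd (forced hbm₁ hm₁a (Ne.symm hab) (Ne.symm hfm₁) hEfb.symm hEaf.symm).2
      (hAsymm_af (forced ham₂ hm₂c hac (Ne.symm hfm₂) hEaf hEfc).1)
  · obtain ⟨hbf, hfa⟩ := forced hbm₁ hm₁a (Ne.symm hab) (Ne.symm hfm₁) hEfb.symm hEaf.symm
    exact .inr ⟨hfa, hbf, (forced hcm₂ hm₂a (Ne.symm hac) (Ne.symm hfm₂) hEfc.symm hEaf.symm).1⟩

/-- extended fork gadget lemma: in any non-transitive
st-orientation of a graph containing the extended fork configuration avoiding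
s and t, either edge {a,f} enters f and edges {f,b}, {f,c} exit f, or
vice versa. -/
theorem stmt1 {V : Type*} [Fintype V] [DecidableEq V]
    (G : SimpleGraph V) [DecidableRel G.Adj]
    (s t : V) (hst : s ≠ t)
    (D : V → V → Prop)
    -- D is an orientation of G
    (hOrient : ∀ u v, D u v → G.Adj u v)
    (hTotal : ∀ u v, G.Adj u v → (D u v ↔ ¬ D v u))
    -- D is acyclic
    (hAcyclic : ∀ x, ¬ Relation.TransGen D x x)
    -- s is the unique source, t is the unique sink
    (hSource : ∀ u, ¬ D u s)
    (hSink : ∀ u, ¬ D t u)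
    (hSourceUnique : ∀ v, (∀ u, ¬ D u v) → v = s)
    (hSinkUnique : ∀ v, (∀ u, ¬ D v u) → v = t)
    -- D has no transitive edges
    (hNonTransitive : ∀ u v, D u v →
      ¬ ∃ w, w ≠ v ∧ D u w ∧ Relation.ReflTransGen D w v)
    -- the extended fork configuration
    (a b c f m₁ m₂ : V)
    (hdistinct : [a, b, c, f, m₁, m₂].Nodup)
    (hEaf : G.Adj a f) (hEfb : G.Adj f b) (hEfc : G.Adj f c)
    (hEam₁ : G.Adj a m₁) (hEm₁b : G.Adj m₁ b)
    (hEam₂ : G.Adj a m₂) (hEm₂c : G.Adj m₂ c)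
    (hdeg₁ : G.degree m₁ = 2) (hdeg₂ : G.degree m₂ = 2)
    (hm₁s : m₁ ≠ s) (hm₁t : m₁ ≠ t) (hm₂s : m₂ ≠ s) (hm₂t : m₂ ≠ t) :
    (D a f ∧ D f b ∧ D f c) ∨ (D f a ∧ D b f ∧ D c f) :=
  stmt1_general G s t D hOrient hTotal hAcyclic hSourceUnique hSinkUnique hNonTransitive a b c f m₁
    m₂ hdistinct hEaf hEfb hEfc hEam₁ hEm₁b hEam₂ hEm₂c hdeg₁ hdeg₂ hm₁s hm₁t hm₂s hm₂t
end

section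
/- Let D be an acyclic digraph on a vertex type V with no transitive edges, and let g be a vertex with no D-edges incident to it. Let I and O be sets of vertices not containing g, and let D' be obtained from D by adding the edges b → g for every b ∈ I and g → a for every a ∈ O. Assume: (i) there is no a ∈ O and b ∈ I with b reachable from a under the reflexive-transitive closure of D; (ii) there is no D-edge (u,v), b ∈ I, and a ∈ O such that b is reachable from u and v is reachable from a under the reflexive-transitive closure of D; (iii) there are no distinct b, b' ∈ I with b' reachable from b by a directed path of positive length in D; (iv) there are no distinct a, a' ∈ O with a' reachable from a by a directed path of positive length in D. Then D' is acyclic and has no transitive edges. -/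
/-!
A directed path of `apexExtension D g I O` meets `g` at most once, since leaving `g` into `O` and
returning through `I` would need a `D`-path from `O` to `I`. Hence every such path is either a
`D`-path or a `D`-path into `I`, the edges through `g`, and a `D`-path out of `O`, where either
end may be `g` itself. A cycle or a transitive edge of the extension is therefore either one of
`D` or excluded by one of the conditions (i)–(iv) on `I` and `O`.
-/

namespace Relation.ReflTransGen

variable {α : Type*} {r : α → α → Prop} {a b : α}

theorem eq_of_forall_not_rel_into (hb : ∀ c, ¬ r c b) (h : ReflTransGen r a b) : a = b := by
  rcases h.cases_tail with rfl | ⟨c, -, hcb⟩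
  · rfl
  · exact absurd hcb (hb c)

theorem eq_of_forall_not_rel_out (ha : ∀ c, ¬ r a c) (h : ReflTransGen r a b) : b = a := by
  rcases h.cases_head with rfl | ⟨c, hac, -⟩
  · rfl
  · exact absurd hac (ha c)

end Relation.ReflTransGen

open Relation

section ApexExtension

variable {V : Type*}

def apexExtension (D : V → V → Prop) (g : V) (I O : Set V) : V → V → Prop :=
  fun u v => D u v ∨ (u ∈ I ∧ v = g) ∨ (u = g ∧ v ∈ O)

variable {D : V → V → Prop} {g : V} {I O : Set V}

theorem apexExtension_reflTransGen_cases (hg : ∀ x, ¬ D x g ∧ ¬ D g x) (hgI : g ∉ I)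
    (hi : ¬ ∃ a ∈ O, ∃ b ∈ I, ReflTransGen D a b) {x y : V}
    (h : ReflTransGen (apexExtension D g I O) x y) :
    ReflTransGen D x y ∨
      ((x = g ∨ ∃ b ∈ I, ReflTransGen D x b) ∧ (y = g ∨ ∃ a ∈ O, ReflTransGen D a y)) := by
  induction h with
  | refl => exact .inl .refl
  | @tail b c _ hbc ih =>
    rcases hbc with hbc | ⟨hbI, rfl⟩ | ⟨rfl, hcO⟩
    · rcases ih with hxb | ⟨hx, rfl | ⟨a, haO, hab⟩⟩
      · exact .inl (hxb.tail hbc)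
      · exact absurd hbc (hg c).2
      · exact .inr ⟨hx, .inr ⟨a, haO, hab.tail hbc⟩⟩
    · rcases ih with hxb | ⟨-, rfl | ⟨a, haO, hab⟩⟩
      · exact .inr ⟨.inr ⟨b, hbI, hxb⟩, .inl rfl⟩
      · exact absurd hbI hgI
      · exact absurd ⟨a, haO, b, hbI, hab⟩ hi
    · rcases ih with hxg | ⟨hx, -⟩
      · exact .inr ⟨.inl (hxg.eq_of_forall_not_rel_into fun x => (hg x).1), .inr ⟨c, hcO, .refl⟩⟩
      · exact .inr ⟨hx, .inr ⟨c, hcO, .refl⟩⟩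

theorem apexExtension_acyclic (hAcyclic : ∀ x, ¬ TransGen D x x)
    (hg : ∀ x, ¬ D x g ∧ ¬ D g x) (hgI : g ∉ I) (hgO : g ∉ O)
    (hi : ¬ ∃ a ∈ O, ∃ b ∈ I, ReflTransGen D a b)
    (hii : ¬ ∃ u v, D u v ∧ ∃ b ∈ I, ∃ a ∈ O, ReflTransGen D u b ∧ ReflTransGen D a v)
    (x : V) : ¬ TransGen (apexExtension D g I O) x x := by
  intro hxx
  obtain ⟨w, hxw, hwx⟩ := TransGen.head'_iff.1 hxx
  have hg_in : ∀ y, ¬ D y g := fun y => (hg y).1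
  have hg_out : ∀ y, ¬ D g y := fun y => (hg y).2
  rcases hxw with hxw | ⟨hxI, rfl⟩ | ⟨rfl, hwO⟩
  · rcases apexExtension_reflTransGen_cases hg hgI hi hwx with
      hwx | ⟨rfl | ⟨b, hbI, hwb⟩, rfl | ⟨a, haO, hax⟩⟩
    · exact hAcyclic x (TransGen.head' hxw hwx)
    · exact hg_in x hxw
    · exact hg_in x hxw
    · exact hg_out w hxw
    · exact hii ⟨x, w, hxw, b, hbI, a, haO, hwb.head hxw, hax.tail hxw⟩
  · rcases apexExtension_reflTransGen_cases hg hgI hi hwx with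
      hgx | ⟨-, rfl | ⟨a, haO, hax⟩⟩
    · exact hgI (hgx.eq_of_forall_not_rel_out hg_out ▸ hxI)
    · exact hgI hxI
    · exact hi ⟨a, haO, x, hxI, hax⟩
  · rcases apexExtension_reflTransGen_cases hg hgI hi hwx with
      hwg | ⟨rfl | ⟨b, hbI, hwb⟩, -⟩
    · exact hgO (hwg.eq_of_forall_not_rel_into hg_in ▸ hwO)
    · exact hgO hwO
    · exact hi ⟨w, hwO, b, hbI, hwb⟩

theorem apexExtension_not_transitive_edge (hAcyclic : ∀ x, ¬ TransGen D x x)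
    (hNonTransitive : ∀ u v, D u v → ¬ ∃ w, w ≠ v ∧ D u w ∧ ReflTransGen D w v)
    (hg : ∀ x, ¬ D x g ∧ ¬ D g x) (hgI : g ∉ I) (hgO : g ∉ O)
    (hi : ¬ ∃ a ∈ O, ∃ b ∈ I, ReflTransGen D a b)
    (hii : ¬ ∃ u v, D u v ∧ ∃ b ∈ I, ∃ a ∈ O, ReflTransGen D u b ∧ ReflTransGen D a v)
    (hiii : ¬ ∃ b ∈ I, ∃ b' ∈ I, b ≠ b' ∧ TransGen D b b')
    (hiv : ¬ ∃ a ∈ O, ∃ a' ∈ O, a ≠ a' ∧ TransGen D a a')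
    {u v : V} (huv : apexExtension D g I O u v) :
    ¬ ∃ w, w ≠ v ∧ apexExtension D g I O u w ∧ ReflTransGen (apexExtension D g I O) w v := by
  rintro ⟨w, hwv, huw, hwv'⟩
  have hg_in : ∀ y, ¬ D y g := fun y => (hg y).1
  have hg_out : ∀ y, ¬ D g y := fun y => (hg y).2
  have hpath := apexExtension_reflTransGen_cases hg hgI hi hwv'
  rcases huv with huv | ⟨huI, rfl⟩ | ⟨rfl, hvO⟩
  · rcases huw with huw | ⟨huI, rfl⟩ | ⟨rfl, -⟩
    · rcases hpath with hwv' | ⟨rfl | ⟨b, hbI, hwb⟩, rfl | ⟨a, haO, hav⟩⟩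
      · exact hNonTransitive u v huv ⟨w, hwv, huw, hwv'⟩
      · exact hg_in u huw
      · exact hg_in u huw
      · exact hg_in u huv
      · exact hii ⟨u, v, huv, b, hbI, a, haO, hwb.head huw, hav⟩
    · rcases hpath with hgv | ⟨-, rfl | ⟨a, haO, hav⟩⟩
      · exact hwv (hgv.eq_of_forall_not_rel_out hg_out).symm
      · exact hg_in u huv
      · exact hii ⟨u, v, huv, u, huI, a, haO, .refl, hav⟩
    · exact hg_out v huv
  · rcases huw with huw | ⟨-, rfl⟩ | ⟨rfl, -⟩
    · rcases hpath with hwg | ⟨rfl | ⟨b, hbI, hwb⟩, -⟩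
      · exact hwv (hwg.eq_of_forall_not_rel_into hg_in)
      · exact hg_in u huw
      · have hub : TransGen D u b := TransGen.head' huw hwb
        by_cases hb : u = b
        · exact hAcyclic u (hb ▸ hub)
        · exact hiii ⟨u, huI, b, hbI, hb, hub⟩
    · exact hwv rfl
    · exact hgI huI
  · rcases huw with huw | ⟨hgI', -⟩ | ⟨-, hwO⟩
    · exact hg_out w huw
    · exact hgI hgI'
    · rcases hpath with hwv' | ⟨rfl | ⟨b, hbI, hwb⟩, -⟩
      · rcases reflTransGen_iff_eq_or_transGen.1 hwv' with rfl | hwv'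
        · exact hwv rfl
        · exact hiv ⟨w, hwO, v, hvO, hwv, hwv'⟩
      · exact hgO hwO
      · exact hi ⟨w, hwO, b, hbI, hwb⟩

end ApexExtension

/-- adding an apex vertex g (in-neighbors I, out-neighbors O) to
an acyclic non-transitive digraph D yields an acyclic non-transitive digraph,
provided (i) no a ∈ O reaches some b ∈ I; (ii) no D-edge (u,v) has b ∈ I
reachable from u and v reachable from a ∈ O; (iii) no two distinct vertices of
I are connected by a directed path of positive length; (iv) same for O. -/
theorem stmt5 {V : Type*} (D : V → V → Prop)
    -- D is acyclic
    (hAcyclic : ∀ x, ¬ Relation.TransGen D x x)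
    -- D has no transitive edges
    (hNonTransitive : ∀ u v, D u v →
      ¬ ∃ w, w ≠ v ∧ D u w ∧ Relation.ReflTransGen D w v)
    -- g has no D-edges incident to it
    (g : V) (hg : ∀ x, ¬ D x g ∧ ¬ D g x)
    -- I and O are sets of vertices not containing g
    (I O : Set V) (hgI : g ∉ I) (hgO : g ∉ O)
    -- D' adds the edges b → g for b ∈ I and g → a for a ∈ O
    (D' : V → V → Prop)
    (hD' : ∀ u v, D' u v ↔ (D u v ∨ (u ∈ I ∧ v = g) ∨ (u = g ∧ v ∈ O)))
    -- (i) no a ∈ O and b ∈ I with b reachable from a in D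
    (hi : ¬ ∃ a ∈ O, ∃ b ∈ I, Relation.ReflTransGen D a b)
    -- (ii) no D-edge (u,v), b ∈ I and a ∈ O with b reachable from u and
    -- v reachable from a in D
    (hii : ¬ ∃ u v, D u v ∧ ∃ b ∈ I, ∃ a ∈ O,
      Relation.ReflTransGen D u b ∧ Relation.ReflTransGen D a v)
    -- (iii) no distinct b, b' ∈ I with b' reachable from b by a directed
    -- path of positive length in D
    (hiii : ¬ ∃ b ∈ I, ∃ b' ∈ I, b ≠ b' ∧ Relation.TransGen D b b')
    -- (iv) no distinct a, a' ∈ O with a' reachable from a by a directed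
    -- path of positive length in D
    (hiv : ¬ ∃ a ∈ O, ∃ a' ∈ O, a ≠ a' ∧ Relation.TransGen D a a') :
    -- D' is acyclic and has no transitive edges
    (∀ x, ¬ Relation.TransGen D' x x) ∧
    (∀ u v, D' u v →
      ¬ ∃ w, w ≠ v ∧ D' u w ∧ Relation.ReflTransGen D' w v) := by
  obtain rfl : D' = apexExtension D g I O := funext₂ fun u v => propext (hD' u v)
  exact ⟨apexExtension_acyclic hAcyclic hg hgI hgO hi hii,
    fun _ _ huv => apexExtension_not_transitive_edge hAcyclic hNonTransitive hg hgI hgO hi hii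
      hiii hiv huv⟩
end

section
/- Let D be a digraph on a vertex type V, let g be a vertex with no D-edges incident to it, let I and O be sets of vertices not containing g, and let D' be obtained from D by adding the edges b → g for every b ∈ I and g → a for every a ∈ O. Assume D' is acyclic. Then a D-edge (u,v) is transitive in D' if and only if it is transitive in D or there exist b ∈ I and a ∈ O such that b is reachable from u and v is reachable from a under the reflexive-transitive closure of D. -/
/-! A path in `D'` that leaves the `D`-edges must visit the apex `g`, which it can only enter
from `I` and only leave towards `O`; cutting the path at its first arrival at `g` and its last
departure from `g` yields `u →* b ∈ I` and `O ∋ a →* v` in `D`. Conversely `u →* b → g → a →* v`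
has length at least two, and acyclicity ensures that its first step does not already land on `v`. -/

open Relation

section General

variable {α : Type*} {R S : α → α → Prop}

theorem reflTransGen_or_passes_through (g : α) (hRS : ∀ x y, R x y → S x y)
    (hS : ∀ x y, S x y → R x y ∨ x = g ∨ y = g) {x y : α} (h : ReflTransGen S x y) :
    ReflTransGen R x y ∨ ReflTransGen S x g ∧ ReflTransGen S g y := by
  induction h with
  | refl => exact Or.inl .refl
  | @tail z y _ hzy ih =>
    rcases ih with hxz | ⟨hxg, hgz⟩
    · rcases hS z y hzy with hR | rfl | rfl
      · exact Or.inl (hxz.tail hR)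
      · exact Or.inr ⟨ReflTransGen.mono hRS _ _ hxz, .single hzy⟩
      · exact Or.inr ⟨(ReflTransGen.mono hRS _ _ hxz).tail hzy, .refl⟩
    · exact Or.inr ⟨hxg, hgz.tail hzy⟩

theorem exists_ne_head_of_transGen_of_transGen (hR : ∀ x, ¬ TransGen R x x) {u m v : α}
    (hum : TransGen R u m) (hmv : TransGen R m v) :
    ∃ w, w ≠ v ∧ R u w ∧ ReflTransGen R w v := by
  obtain ⟨w, huw, hwm⟩ := TransGen.head'_iff.1 hum
  refine ⟨w, ?_, huw, hwm.trans hmv.to_reflTransGen⟩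
  rintro rfl
  exact hR w (TransGen.trans_right hwm hmv)

end General

section Apex

variable {V : Type*} {D D' : V → V → Prop} {g : V} {I O : Set V}
  (hD' : ∀ u v, D' u v ↔ (D u v ∨ (u ∈ I ∧ v = g) ∨ (u = g ∧ v ∈ O)))
include hD'

theorem eq_or_exists_mem_out_of_reflTransGen_apex (hg : ∀ x, ¬ D g x) {y : V}
    (h : ReflTransGen D' g y) : y = g ∨ ∃ a ∈ O, ReflTransGen D a y := by
  induction h with
  | refl => exact Or.inl rfl
  | @tail z y _ hzy ih =>
    rcases (hD' z y).1 hzy with hD | ⟨-, rfl⟩ | ⟨-, hy⟩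
    · rcases ih with rfl | ⟨a, ha, haz⟩
      · exact absurd hD (hg y)
      · exact Or.inr ⟨a, ha, haz.tail hD⟩
    · exact Or.inl rfl
    · exact Or.inr ⟨y, hy, .refl⟩

theorem eq_or_exists_mem_in_of_reflTransGen_apex (hg : ∀ x, ¬ D x g) {x : V}
    (h : ReflTransGen D' x g) : x = g ∨ ∃ b ∈ I, ReflTransGen D x b := by
  induction h using ReflTransGen.head_induction_on with
  | refl => exact Or.inl rfl
  | @head x z hxz _ ih =>
    rcases (hD' x z).1 hxz with hD | ⟨hx, -⟩ | ⟨rfl, -⟩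
    · rcases ih with rfl | ⟨b, hb, hzb⟩
      · exact absurd hD (hg x)
      · exact Or.inr ⟨b, hb, hzb.head hD⟩
    · exact Or.inr ⟨x, hx, .refl⟩
    · exact Or.inl rfl

theorem reflTransGen_or_exists_of_reflTransGen_apex (hg : ∀ x, ¬ D x g ∧ ¬ D g x) {x y : V}
    (hx : x ≠ g) (hy : y ≠ g) (h : ReflTransGen D' x y) :
    ReflTransGen D x y ∨
      ∃ b ∈ I, ∃ a ∈ O, ReflTransGen D x b ∧ ReflTransGen D a y := by
  have hDD' : ∀ x y, D x y → D' x y := fun x y hxy => (hD' x y).2 (Or.inl hxy)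
  have hD'g : ∀ x y, D' x y → D x y ∨ x = g ∨ y = g := by
    intro x y hxy
    rcases (hD' x y).1 hxy with hD | ⟨-, rfl⟩ | ⟨rfl, -⟩ <;> simp [*]
  refine (reflTransGen_or_passes_through g hDD' hD'g h).imp_right fun ⟨hxg, hgy⟩ => ?_
  obtain ⟨b, hb, hxb⟩ :=
    (eq_or_exists_mem_in_of_reflTransGen_apex hD' (fun x => (hg x).1) hxg).resolve_left hx
  obtain ⟨a, ha, hay⟩ :=
    (eq_or_exists_mem_out_of_reflTransGen_apex hD' (fun x => (hg x).2) hgy).resolve_left hy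
  exact ⟨b, hb, a, ha, hxb, hay⟩

end Apex

theorem stmt6_general {V : Type*} (D : V → V → Prop)
    -- g has no D-edges incident to it
    (g : V) (hg : ∀ x, ¬ D x g ∧ ¬ D g x)
    (I O : Set V)
    -- D' adds the edges b → g for b ∈ I and g → a for a ∈ O
    (D' : V → V → Prop)
    (hD' : ∀ u v, D' u v ↔ (D u v ∨ (u ∈ I ∧ v = g) ∨ (u = g ∧ v ∈ O)))
    -- D' is acyclic
    (hAcyclic : ∀ x, ¬ Relation.TransGen D' x x)
    -- (u,v) is a D-edge
    (u v : V) (huv : D u v) :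
    -- (u,v) is transitive in D' iff it is transitive in D or some path
    -- through g witnesses it
    ((∃ w, w ≠ v ∧ D' u w ∧ Relation.ReflTransGen D' w v) ↔
      ((∃ w, w ≠ v ∧ D u w ∧ Relation.ReflTransGen D w v) ∨
        (∃ b ∈ I, ∃ a ∈ O,
          Relation.ReflTransGen D u b ∧ Relation.ReflTransGen D a v))) := by
  have hug : u ≠ g := fun h => (hg v).2 (h ▸ huv)
  have hvg : v ≠ g := fun h => (hg u).1 (h ▸ huv)
  have hDD' : ∀ x y, D x y → D' x y := fun x y hxy => (hD' x y).2 (Or.inl hxy)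
  constructor
  · rintro ⟨w, hwv, huw, hwv'⟩
    rcases (hD' u w).1 huw with huw | ⟨hu, rfl⟩ | ⟨rfl, -⟩
    · have hwg : w ≠ g := fun h => (hg u).1 (h ▸ huw)
      refine (reflTransGen_or_exists_of_reflTransGen_apex hD' hg hwg hvg hwv').imp
        (fun hwv' => ⟨w, hwv, huw, hwv'⟩) fun ⟨b, hb, a, ha, hwb, hav⟩ => ?_
      exact ⟨b, hb, a, ha, hwb.head huw, hav⟩
    · obtain ⟨a, ha, hav⟩ :=
        (eq_or_exists_mem_out_of_reflTransGen_apex hD' (fun x => (hg x).2) hwv').resolve_left hvg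
      exact Or.inr ⟨u, hu, a, ha, .refl, hav⟩
    · exact absurd rfl hug
  · rintro (⟨w, hwv, huw, hwv'⟩ | ⟨b, hb, a, ha, hub, hav⟩)
    · exact ⟨w, hwv, hDD' u w huw, ReflTransGen.mono hDD' _ _ hwv'⟩
    · have hbg : D' b g := (hD' b g).2 (Or.inr (Or.inl ⟨hb, rfl⟩))
      have hga : D' g a := (hD' g a).2 (Or.inr (Or.inr ⟨rfl, ha⟩))
      exact exists_ne_head_of_transGen_of_transGen hAcyclic
        (TransGen.tail' (ReflTransGen.mono hDD' _ _ hub) hbg)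
        (TransGen.head' hga (ReflTransGen.mono hDD' _ _ hav))

/-- after adding an apex vertex g (in-neighbors I, out-neighbors
O) to a digraph D, and assuming the result D' is acyclic, a D-edge (u,v) is
transitive in D' iff it is transitive in D or there exist b ∈ I and a ∈ O with
b reachable from u and v reachable from a in D. -/
theorem stmt6 {V : Type*} (D : V → V → Prop)
    -- g has no D-edges incident to it
    (g : V) (hg : ∀ x, ¬ D x g ∧ ¬ D g x)
    -- I and O are sets of vertices not containing g
    (I O : Set V) (hgI : g ∉ I) (hgO : g ∉ O)
    -- D' adds the edges b → g for b ∈ I and g → a for a ∈ O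
    (D' : V → V → Prop)
    (hD' : ∀ u v, D' u v ↔ (D u v ∨ (u ∈ I ∧ v = g) ∨ (u = g ∧ v ∈ O)))
    -- D' is acyclic
    (hAcyclic : ∀ x, ¬ Relation.TransGen D' x x)
    -- (u,v) is a D-edge
    (u v : V) (huv : D u v) :
    -- (u,v) is transitive in D' iff it is transitive in D or some path
    -- through g witnesses it
    ((∃ w, w ≠ v ∧ D' u w ∧ Relation.ReflTransGen D' w v) ↔
      ((∃ w, w ≠ v ∧ D u w ∧ Relation.ReflTransGen D w v) ∨
        (∃ b ∈ I, ∃ a ∈ O,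
          Relation.ReflTransGen D u b ∧ Relation.ReflTransGen D a v))) :=
  stmt6_general D g hg I O D' hD' hAcyclic u v huv
end
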